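/- Let q ∈ L¹(ℝ) ∩ L²(ℝ). Then for every x ∈ ℝ, every integer n ≥ 1, and every λ ∈ ℂ with Im λ ≥ 0, the iterate χ_n satisfies |χ_n(x,λ)| ≤ (1/(2n)!) · (∫_x^∞ |q(τ)| dτ)^{2n}. -/

import Mathlib

open MeasureTheory Set Filter

noncomputable def Gker (q : ℝ → ℂ) (x s : ℝ) (l : ℂ) : ℂ :=
  (starRingEnd ℂ) (q s) *
    ∫ t in x..s, Complex.exp (2 * Complex.I * l * ((s : ℂ) - (t : ℂ))) * q t

noncomputable def chiIter (q : ℝ → ℂ) : ℕ → ℝ → ℂ → ℂ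
  | 0, _, _ => 1
  | n + 1, x, l => ∫ s in Set.Ioi x, Gker q x s l * chiIter q n s l

noncomputable def chiFun (q : ℝ → ℂ) (x : ℝ) (l : ℂ) : ℂ :=
  1 + ∑' n : ℕ, chiIter q (n + 1) x l

noncomputable def aFun (q : ℝ → ℂ) (l : ℂ) : ℂ := chiFun q 0 l

def CondA (q : ℝ → ℂ) (γ : ℝ) : Prop :=
  0 < γ ∧ convexHull ℝ (tsupport q) = Set.Icc 0 γ

noncomputable def normL1 (q : ℝ → ℂ) : ℝ := ∫ t : ℝ, ‖q t‖
noncomputable def normL2 (q : ℝ → ℂ) : ℝ := Real.sqrt (∫ t : ℝ, ‖q t‖ ^ 2)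
noncomputable def PhiF (q : ℝ → ℂ) (x : ℝ) : ℝ := Real.cosh (∫ s in Set.Ioi x, ‖q s‖)

def ZeroOrder (f : ℂ → ℂ) (z : ℂ) (m : ℕ) : Prop :=
  ∃ g : ℂ → ℂ, Differentiable ℂ g ∧ g z ≠ 0 ∧ ∀ w, f w = (w - z) ^ m * g w

/-! With `Q x = ∫_x^∞ |q|`, the bound `|e^{2iλ(s-t)}| ≤ 1` for `Im λ ≥ 0`, `t ≤ s` gives
`|G(x,s,λ)| ≤ |q s| (Q x - Q s)`, so by induction `|χ_n(x)| ≤ Q(x)^{2n} / (2n)!`. The inductive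
step rests on `∫_x^∞ |q s| Q(s)^k ds = Q(x)^{k+1} / (k+1)`: `Q` is differentiable only almost
everywhere, so instead of the fundamental theorem of calculus this identity is proved by
induction on `k`, applying Fubini on the triangle `x < t ≤ s`. -/

noncomputable def tailIntegral (f : ℝ → ℝ) (x : ℝ) : ℝ := ∫ t in Ioi x, f t

section TailIntegral

variable {f : ℝ → ℝ}

theorem tailIntegral_eq_intervalIntegral_add (hf : Integrable f) (x y : ℝ) :
    tailIntegral f x = (∫ t in x..y, f t) + tailIntegral f y := by
  rw [← intervalIntegral.integral_Ioi_sub_Ioi' hf.integrableOn hf.integrableOn, tailIntegral,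
    tailIntegral, sub_add_cancel]

theorem continuous_tailIntegral (hf : Integrable f) : Continuous (tailIntegral f) := by
  have h : tailIntegral f = fun x => tailIntegral f 0 - ∫ t in (0 : ℝ)..x, f t := by
    ext x
    rw [tailIntegral_eq_intervalIntegral_add hf 0 x, add_sub_cancel_left]
  rw [h]
  exact continuous_const.sub
    (intervalIntegral.continuous_primitive (fun _ _ => hf.intervalIntegrable) 0)

theorem norm_tailIntegral_le (hf : Integrable f) (x : ℝ) :
    ‖tailIntegral f x‖ ≤ ∫ t, ‖f t‖ :=
  (norm_integral_le_integral_norm _).trans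
    (setIntegral_le_integral hf.norm (Eventually.of_forall fun _ => norm_nonneg _))

theorem integrable_mul_tailIntegral_pow (hf : Integrable f) (k : ℕ) :
    Integrable fun s => f s * tailIntegral f s ^ k := by
  refine hf.mul_bdd (c := (∫ t, ‖f t‖) ^ k)
    ((continuous_tailIntegral hf).pow k).aestronglyMeasurable (Eventually.of_forall fun s => ?_)
  rw [norm_pow]
  exact pow_le_pow_left₀ (norm_nonneg _) (norm_tailIntegral_le hf s) k

theorem integrable_intervalIntegral_mul {g : ℝ → ℝ} (hf : Integrable f) (hg : Integrable g)
    (x : ℝ) : Integrable fun s => (∫ t in x..s, f t) * g s := by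
  have hcont : Continuous fun s => ∫ t in x..s, f t :=
    intervalIntegral.continuous_primitive (fun _ _ => hf.intervalIntegrable) x
  refine hg.bdd_mul (c := 2 * ∫ t, ‖f t‖) hcont.aestronglyMeasurable
    (Eventually.of_forall fun s => ?_)
  rw [eq_sub_of_add_eq (tailIntegral_eq_intervalIntegral_add hf x s).symm]
  linarith [norm_sub_le (tailIntegral f x) (tailIntegral f s), norm_tailIntegral_le hf x,
    norm_tailIntegral_le hf s]

theorem setIntegral_Ioi_intervalIntegral_mul {g : ℝ → ℝ} {x : ℝ}
    (hf : IntegrableOn f (Ioi x)) (hg : IntegrableOn g (Ioi x)) :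
    ∫ s in Ioi x, (∫ t in x..s, f t) * g s = ∫ t in Ioi x, f t * ∫ s in Ioi t, g s := by
  set F : ℝ × ℝ → ℝ := {p | p.2 ≤ p.1}.indicator fun p => g p.1 * f p.2 with hF_def
  have hF : Integrable F ((volume.restrict (Ioi x)).prod (volume.restrict (Ioi x))) :=
    (hg.mul_prod hf).indicator (measurableSet_le measurable_snd measurable_fst)
  have inner_t : ∀ s ∈ Ioi x, ∫ t in Ioi x, F (s, t) = (∫ t in x..s, f t) * g s := by
    intro s hs
    have : (fun t => F (s, t)) = (Iic s).indicator fun t => f t * g s := by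
      ext t; by_cases h : t ≤ s <;> simp [hF_def, h, mul_comm]
    rw [this, setIntegral_indicator measurableSet_Iic, Ioi_inter_Iic, integral_mul_const,
      intervalIntegral.integral_of_le (le_of_lt hs)]
  have inner_s : ∀ t ∈ Ioi x, ∫ s in Ioi x, F (s, t) = f t * ∫ s in Ioi t, g s := by
    intro t ht
    have : (fun s => F (s, t)) = (Ici t).indicator fun s => f t * g s := by
      ext s; by_cases h : t ≤ s <;> simp [hF_def, h, mul_comm]
    rw [this, setIntegral_indicator measurableSet_Ici,
      inter_eq_self_of_subset_right (Ici_subset_Ioi.mpr ht), integral_const_mul,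
      integral_Ici_eq_integral_Ioi]
  calc ∫ s in Ioi x, (∫ t in x..s, f t) * g s
      = ∫ s in Ioi x, ∫ t in Ioi x, F (s, t) :=
        (setIntegral_congr_fun measurableSet_Ioi inner_t).symm
    _ = ∫ t in Ioi x, ∫ s in Ioi x, F (s, t) := integral_integral_swap hF
    _ = ∫ t in Ioi x, f t * ∫ s in Ioi t, g s := setIntegral_congr_fun measurableSet_Ioi inner_s

theorem integral_mul_tailIntegral_pow (hf : Integrable f) (k : ℕ) (x : ℝ) :
    ∫ s in Ioi x, f s * tailIntegral f s ^ k = tailIntegral f x ^ (k + 1) / (k + 1) := by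
  induction k generalizing x with
  | zero => simp [tailIntegral]
  | succ k ih =>
    have hJ : ∫ s in Ioi x, (∫ t in x..s, f t) * (f s * tailIntegral f s ^ k)
        = (∫ s in Ioi x, f s * tailIntegral f s ^ (k + 1)) / (k + 1) := by
      rw [setIntegral_Ioi_intervalIntegral_mul hf.integrableOn
        (integrable_mul_tailIntegral_pow hf k).integrableOn, ← integral_div]
      refine setIntegral_congr_fun measurableSet_Ioi fun t _ => ?_
      rw [ih t]
      ring
    have hsplit : ∫ s in Ioi x, (∫ t in x..s, f t) * (f s * tailIntegral f s ^ k)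
        = tailIntegral f x * (∫ s in Ioi x, f s * tailIntegral f s ^ k)
          - ∫ s in Ioi x, f s * tailIntegral f s ^ (k + 1) := by
      rw [← integral_const_mul, ← integral_sub
        ((integrable_mul_tailIntegral_pow hf k).integrableOn.const_mul _)
        (integrable_mul_tailIntegral_pow hf (k + 1)).integrableOn]
      refine setIntegral_congr_fun measurableSet_Ioi fun s _ => ?_
      rw [tailIntegral_eq_intervalIntegral_add hf x s]
      ring
    rw [hJ, ih x] at hsplit
    generalize ∫ s in Ioi x, f s * tailIntegral f s ^ (k + 1) = L at hsplit ⊢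
    push_cast
    field_simp at hsplit ⊢
    linear_combination hsplit

theorem integral_intervalIntegral_mul_mul_tailIntegral_pow (hf : Integrable f) (k : ℕ)
    (x : ℝ) :
    ∫ s in Ioi x, (∫ t in x..s, f t) * (f s * tailIntegral f s ^ k)
      = tailIntegral f x ^ (k + 2) / ((k + 1) * (k + 2)) := by
  rw [setIntegral_Ioi_intervalIntegral_mul hf.integrableOn
    (integrable_mul_tailIntegral_pow hf k).integrableOn]
  calc ∫ t in Ioi x, f t * ∫ s in Ioi t, f s * tailIntegral f s ^ k
      = (∫ t in Ioi x, f t * tailIntegral f t ^ (k + 1)) / (k + 1) := by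
        rw [← integral_div]
        refine setIntegral_congr_fun measurableSet_Ioi fun t _ => ?_
        rw [integral_mul_tailIntegral_pow hf k t]
        ring
    _ = tailIntegral f x ^ (k + 2) / ((k + 1) * (k + 2)) := by
        rw [integral_mul_tailIntegral_pow hf (k + 1) x, div_div]
        push_cast
        ring

end TailIntegral

theorem norm_cexp_two_mul_I_mul_le_one {l : ℂ} (hl : 0 ≤ l.im) {r : ℝ} (hr : 0 ≤ r) :
    ‖Complex.exp (2 * Complex.I * l * r)‖ ≤ 1 := by
  rw [Complex.norm_exp, Real.exp_le_one_iff]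
  simp only [Complex.mul_re, Complex.mul_im, Complex.I_re, Complex.I_im, Complex.ofReal_re,
    Complex.ofReal_im]
  norm_num
  positivity

theorem norm_Gker_le {q : ℝ → ℂ} (hq : Integrable q) {l : ℂ} (hl : 0 ≤ l.im) {x s : ℝ}
    (hxs : x ≤ s) : ‖Gker q x s l‖ ≤ ‖q s‖ * ∫ t in x..s, ‖q t‖ := by
  rw [Gker, norm_mul, Complex.norm_conj]
  gcongr
  refine intervalIntegral.norm_integral_le_of_norm_le hxs
    (Eventually.of_forall fun t ht => ?_) hq.norm.intervalIntegrable
  rw [norm_mul]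
  refine mul_le_of_le_one_left (norm_nonneg _) ?_
  simpa using norm_cexp_two_mul_I_mul_le_one hl (sub_nonneg.mpr ht.2)

theorem norm_chiIter_le {q : ℝ → ℂ} (hq : Integrable q) {l : ℂ} (hl : 0 ≤ l.im) (n : ℕ)
    (x : ℝ) :
    ‖chiIter q n x l‖ ≤ tailIntegral (‖q ·‖) x ^ (2 * n) / (2 * n).factorial := by
  induction n generalizing x with
  | zero => simp [chiIter]
  | succ n ih =>
    set Q := tailIntegral (‖q ·‖)
    have hbound : ∀ s ∈ Ioi x, ‖Gker q x s l * chiIter q n s l‖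
        ≤ (∫ t in x..s, ‖q t‖) * (‖q s‖ * Q s ^ (2 * n)) / (2 * n).factorial := by
      intro s hs
      have hxs : x ≤ s := le_of_lt hs
      calc ‖Gker q x s l * chiIter q n s l‖
          = ‖Gker q x s l‖ * ‖chiIter q n s l‖ := norm_mul _ _
        _ ≤ (‖q s‖ * ∫ t in x..s, ‖q t‖) * (Q s ^ (2 * n) / (2 * n).factorial) :=
            mul_le_mul (norm_Gker_le hq hl hxs) (ih s) (norm_nonneg _) (mul_nonneg (norm_nonneg _)
              (intervalIntegral.integral_nonneg hxs fun _ _ => norm_nonneg _))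
        _ = (∫ t in x..s, ‖q t‖) * (‖q s‖ * Q s ^ (2 * n)) / (2 * n).factorial := by ring
    calc ‖chiIter q (n + 1) x l‖
        = ‖∫ s in Ioi x, Gker q x s l * chiIter q n s l‖ := rfl
      _ ≤ ∫ s in Ioi x, (∫ t in x..s, ‖q t‖) * (‖q s‖ * Q s ^ (2 * n)) / (2 * n).factorial :=
          norm_integral_le_of_norm_le (((integrable_intervalIntegral_mul hq.norm
              (integrable_mul_tailIntegral_pow hq.norm _) x).div_const _).integrableOn)
            ((ae_restrict_iff' measurableSet_Ioi).mpr (Eventually.of_forall hbound))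
      _ = Q x ^ (2 * n + 2) / ((2 * n + 1) * (2 * n + 2)) / (2 * n).factorial := by
          rw [integral_div, integral_intervalIntegral_mul_mul_tailIntegral_pow hq.norm]
          push_cast
          ring
      _ = Q x ^ (2 * (n + 1)) / (2 * (n + 1)).factorial := by
          rw [show 2 * (n + 1) = 2 * n + 1 + 1 by ring, Nat.factorial_succ, Nat.factorial_succ,
            div_div]
          push_cast
          congr 1
          ring

theorem stmt12_general (q : ℝ → ℂ) (hq1 : Integrable q) :
    ∀ x : ℝ, ∀ n : ℕ, 1 ≤ n → ∀ l : ℂ, 0 ≤ l.im →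
      ‖chiIter q n x l‖ ≤
        (1 / (Nat.factorial (2 * n) : ℝ)) * (∫ t in Set.Ioi x, ‖q t‖) ^ (2 * n) := by
  intro x n _ l hl
  rw [one_div_mul_eq_div]
  exact norm_chiIter_le hq1 hl n x

theorem stmt12 (q : ℝ → ℂ) (hq1 : Integrable q) (hq2 : MemLp q 2) :
    ∀ x : ℝ, ∀ n : ℕ, 1 ≤ n → ∀ l : ℂ, 0 ≤ l.im →
      ‖chiIter q n x l‖ ≤
        (1 / (Nat.factorial (2 * n) : ℝ)) * (∫ t in Set.Ioi x, ‖q t‖) ^ (2 * n) :=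
  stmt12_general q hq1
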